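/- A series of real numbers is permutably convergent if and only if it is weak-permutably convergent. (Classical equivalence.) -/

import Mathlib

def SeriesConvTo (a : ℕ → ℝ) (s : ℝ) : Prop :=
  Filter.Tendsto (fun n => ∑ i ∈ Finset.range n, a i) Filter.atTop (nhds s)

def BracketConvTo (c : ℕ → ℝ) (f : ℕ → ℕ) (t : ℝ) : Prop :=
  StrictMono f ∧ f 0 = 0 ∧
    Filter.Tendsto (fun K => ∑ i ∈ Finset.range (f K), c i) Filter.atTop (nhds t)

/-
If the series converges but is not absolutely convergent, both its positive and its negative
part diverge. Enumerate the nonnegative terms and the negative terms separately and interleave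
them, inserting the `k`-th negative term only after so many nonnegative terms that the running
sum exceeds `k` plus the total size of the first `k + 1` negative terms. The partial sums of this
rearrangement tend to `+∞`, so no bracketing of it converges. Hence a weak-permutably convergent
series converges absolutely, and then every rearrangement converges.
-/

open Filter Finset

namespace Nat

theorem count_add_count_not (p : ℕ → Prop) [DecidablePred p] (n : ℕ) :
    count p n + count (¬p ·) n = n := by
  simp only [count_eq_card_filter_range, card_filter_add_card_filter_not, card_range]

theorem count_mem_range_apply {g : ℕ → ℕ} [DecidablePred (· ∈ Set.range g)] (hg : StrictMono g)
    (k : ℕ) : count (· ∈ Set.range g) (g k) = k := by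
  have h : {x ∈ range (g k) | x ∈ Set.range g} = (range k).image g := by
    ext i
    simp only [mem_filter, mem_range, mem_image, Set.mem_range]
    constructor
    · rintro ⟨hi, j, rfl⟩
      exact ⟨j, hg.lt_iff_lt.1 hi, rfl⟩
    · rintro ⟨j, hj, rfl⟩
      exact ⟨hg hj, j, rfl⟩
  rw [count_eq_card_filter_range, h, Finset.card_image_of_injective _ hg.injective, card_range]

noncomputable def matchNth (p q : ℕ → Prop) [DecidablePred p] [DecidablePred q] (n : ℕ) : ℕ :=
  if p n then nth q (count p n) else nth (¬q ·) (count (¬p ·) n)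

section

variable {p q : ℕ → Prop} [DecidablePred p] [DecidablePred q]

theorem matchNth_matchNth (hq : {n | q n}.Infinite) (hq' : {n | ¬q n}.Infinite) (n : ℕ) :
    matchNth q p (matchNth p q n) = n := by
  by_cases h : p n
  · have hq_mem : q (nth q (count p n)) := nth_mem_of_infinite hq _
    simp [matchNth, h, hq_mem, count_nth_of_infinite hq, nth_count h]
  · have hq_mem : ¬q (nth (¬q ·) (count (¬p ·) n)) := nth_mem_of_infinite hq' _
    simp [matchNth, h, hq_mem, count_nth_of_infinite hq', nth_count (p := (¬p ·)) h]

noncomputable def matchNthPerm (hp : {n | p n}.Infinite) (hp' : {n | ¬p n}.Infinite)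
    (hq : {n | q n}.Infinite) (hq' : {n | ¬q n}.Infinite) : Equiv.Perm ℕ where
  toFun := matchNth p q
  invFun := matchNth q p
  left_inv := matchNth_matchNth hq hq'
  right_inv := matchNth_matchNth hp hp'

theorem sum_range_matchNth {M : Type*} [AddCommMonoid M] (F : ℕ → M) (n : ℕ) :
    ∑ i ∈ range n, F (matchNth p q i) =
      ∑ j ∈ range (count p n), F (nth q j) + ∑ j ∈ range (count (¬p ·) n), F (nth (¬q ·) j) := by
  induction n with
  | zero => simp
  | succ n ih =>
    by_cases h : p n
    · rw [sum_range_succ, ih, matchNth, if_pos h, count_succ, if_pos h, count_succ,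
        if_neg (not_not.2 h)]
      simp only [add_zero, sum_range_succ, add_right_comm]
    · rw [sum_range_succ, ih, matchNth, if_neg h, count_succ, if_neg h, count_succ, if_pos h]
      simp only [add_zero, sum_range_succ, add_assoc]

end

end Nat

open Classical in
theorem exists_tendsto_sum_range_count_atTop {u v : ℕ → ℝ} (hu0 : ∀ j, 0 ≤ u j)
    (hu : Tendsto (fun M => ∑ j ∈ range M, u j) atTop atTop) :
    ∃ p : ℕ → Prop, {n | p n}.Infinite ∧ {n | ¬p n}.Infinite ∧
      Tendsto (fun n => ∑ j ∈ range (Nat.count p n), v j + ∑ j ∈ range (Nat.count (¬p ·) n), u j)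
        atTop atTop := by
  obtain ⟨m, hm, hmu⟩ := extraction_forall_of_eventually
    (P := fun k M => k - ∑ j ∈ range (k + 1), v j ≤ ∑ j ∈ range M, u j)
    fun k => hu.eventually_ge_atTop _
  -- `g k` is the position of `v k`; the first `m k` terms of `u` come before it.
  set g : ℕ → ℕ := fun k => m k + k
  have hg : StrictMono g := hm.add strictMono_id
  set p : ℕ → Prop := (· ∈ Set.range g)
  have hcount (k : ℕ) : Nat.count p (g k) = k := Nat.count_mem_range_apply hg k
  have hcount_not (k : ℕ) : Nat.count (¬p ·) (g k) = m k := by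
    have h := Nat.count_add_count_not p (g k)
    rw [hcount k] at h
    change k + _ = m k + k at h
    omega
  have hu_mono : Monotone fun M => ∑ j ∈ range M, u j :=
    fun _ _ h => sum_le_sum_of_subset_of_nonneg (range_mono h) fun j _ _ => hu0 j
  have hbound (k n : ℕ) (hn : g k < n) :
      (k : ℝ) ≤ ∑ j ∈ range (Nat.count p n), v j + ∑ j ∈ range (Nat.count (¬p ·) n), u j := by
    have hk : k < Nat.count p n := hcount k ▸ Nat.count_strict_mono ⟨k, rfl⟩ hn
    obtain ⟨k', hk'⟩ : ∃ k', Nat.count p n = k' + 1 := ⟨Nat.count p n - 1, by omega⟩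
    have hgk' : g k' < n := Nat.lt_of_count_lt_count (p := p) (by rw [hcount k', hk']; omega)
    have hm_le : m k' ≤ Nat.count (¬p ·) n := by
      have h := Nat.count_add_count_not p n
      change m k' + k' < n at hgk'
      omega
    rw [hk'] at hk ⊢
    calc (k : ℝ) ≤ k' := by exact_mod_cast Nat.le_of_lt_succ hk
      _ ≤ ∑ j ∈ range (k' + 1), v j + ∑ j ∈ range (m k'), u j := by linarith [hmu k']
      _ ≤ _ := add_le_add_right (hu_mono hm_le) _
  refine ⟨p, Set.infinite_range_of_injective hg.injective, fun hfin => ?_, ?_⟩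
  · have h := Nat.count_le_card hfin (g (hfin.toFinset.card + 1))
    rw [hcount_not] at h
    have := hm.le_apply (x := hfin.toFinset.card + 1)
    omega
  · exact tendsto_atTop_atTop.2 fun b =>
      ⟨g ⌈b⌉₊ + 1, fun n hn => (Nat.le_ceil b).trans (hbound _ n hn)⟩

theorem exists_perm_tendsto_sum_range_atTop {a : ℕ → ℝ} (hpos : ¬Summable a⁺)
    (hneg : ¬Summable a⁻) :
    ∃ σ : Equiv.Perm ℕ, Tendsto (fun n => ∑ i ∈ range n, a (σ i)) atTop atTop := by
  classical
  have hN : {n | a n < 0}.Infinite :=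
    (show (Function.support a⁻).Infinite from mt summable_of_hasFiniteSupport hneg).mono
      fun n (hn : a⁻ n ≠ 0) => not_le.1 fun h => hn (negPart_eq_zero.2 h)
  have hP : {n | ¬a n < 0}.Infinite :=
    (show (Function.support a⁺).Infinite from mt summable_of_hasFiniteSupport hpos).mono
      fun n (hn : a⁺ n ≠ 0) h => hn (posPart_eq_zero.2 h.le)
  have hPnonneg (j : ℕ) : 0 ≤ a (Nat.nth (¬a · < 0) j) := not_lt.1 (Nat.nth_mem_of_infinite hP j)
  have hPsum : Tendsto (fun M => ∑ j ∈ range M, a (Nat.nth (¬a · < 0) j)) atTop atTop := by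
    refine (not_summable_iff_tendsto_nat_atTop_of_nonneg hPnonneg).1 fun h => hpos ?_
    refine ((Nat.nth_strictMono hP).injective.summable_iff fun n hn => ?_).1 ?_
    · rw [Nat.range_nth_of_infinite hP] at hn
      exact posPart_eq_zero.2 (not_not.1 hn).le
    · exact h.congr fun j => (posPart_eq_self.2 (hPnonneg j)).symm
  obtain ⟨p, hp, hp', hS⟩ := exists_tendsto_sum_range_count_atTop
    (v := fun j => a (Nat.nth (a · < 0) j)) hPnonneg hPsum
  exact ⟨Nat.matchNthPerm hp hp' hN hP, hS.congr fun n => (Nat.sum_range_matchNth a n).symm⟩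

theorem BracketConvTo.not_tendsto_atTop {c : ℕ → ℝ} {f : ℕ → ℕ} {t : ℝ}
    (h : BracketConvTo c f t) :
    ¬Tendsto (fun n => ∑ i ∈ range n, c i) atTop atTop := fun htop =>
  not_tendsto_nhds_of_tendsto_atTop (htop.comp h.1.tendsto_atTop) t h.2.2

theorem SeriesConvTo.summable_negPart_iff {a : ℕ → ℝ} {s : ℝ} (hs : SeriesConvTo a s) :
    Summable a⁻ ↔ Summable a⁺ := by
  have hdecomp (n : ℕ) : (a n)⁺ - (a n)⁻ = a n := posPart_sub_negPart (a n)
  constructor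
  · intro h
    refine ((hasSum_iff_tendsto_nat_of_nonneg (fun n => posPart_nonneg (a n)) _).2
      ((hs.add h.hasSum.tendsto_sum_nat).congr fun n => ?_)).summable
    rw [← sum_add_distrib]
    exact sum_congr rfl fun i _ => by rw [Pi.negPart_apply]; linarith [hdecomp i]
  · intro h
    refine ((hasSum_iff_tendsto_nat_of_nonneg (fun n => negPart_nonneg (a n)) _).2
      ((h.hasSum.tendsto_sum_nat.sub hs).congr fun n => ?_)).summable
    rw [← sum_sub_distrib]
    exact sum_congr rfl fun i _ => by rw [Pi.posPart_apply]; linarith [hdecomp i]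

/-- Classically, a series is permutably convergent iff it is weak-permutably convergent. -/
theorem perm_iff_weakPerm (a : ℕ → ℝ) :
    (∀ σ : Equiv.Perm ℕ, ∃ l, SeriesConvTo (fun n => a (σ n)) l) ↔
      ((∃ s, SeriesConvTo a s) ∧
        ∀ σ : Equiv.Perm ℕ, ∃ f : ℕ → ℕ, ∃ t : ℝ, BracketConvTo (fun n => a (σ n)) f t) := by
  refine ⟨fun h => ⟨h 1, fun σ => ?_⟩, fun ⟨⟨s, hs⟩, hbr⟩ σ => ?_⟩
  · obtain ⟨l, hl⟩ := h σ
    exact ⟨id, l, strictMono_id, rfl, hl⟩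
  · have hpos : Summable a⁺ := by
      by_contra hpos
      obtain ⟨τ, hτ⟩ :=
        exists_perm_tendsto_sum_range_atTop hpos (mt hs.summable_negPart_iff.1 hpos)
      obtain ⟨f, t, hf⟩ := hbr τ
      exact hf.not_tendsto_atTop hτ
    have ha : Summable a :=
      (hpos.sub (hs.summable_negPart_iff.2 hpos)).congr fun n => posPart_sub_negPart (a n)
    exact ⟨_, (σ.summable_iff.2 ha).hasSum.tendsto_sum_nat⟩
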